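/- Let G = (V,E) be a DAG, let L ⊆ V, and let Z₀, Z₁, Z₂ be nodes. Suppose there exists an inducing path π₀₁ from Z₀ to Z₁ with respect to S and L that has an arrowhead at Z₁, and an inducing path π₁₂ from Z₁ to Z₂ with respect to S′ and L that has an arrowhead at Z₁. Then the walk w₀₁₂ = π₀₁π₁₂ obtained by concatenating the two paths can be truncated to an inducing path from Z₀ to Z₂ with respect to S ∪ S′ ∪ {Z₁} and L in G. -/

import Mathlib

/-!
Common definitions: mixed graphs, walks, colliders, m-separation,
ancestral graphs, DAGs, MAGs, proper causal paths, adjustment criteria,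
inducing paths, and MAG marginalization.
-/

universe u

/-- The four possible kinds of edges of a mixed graph, oriented along the
direction of traversal: `u → v`, `u ← v`, `u ↔ v`, `u − v`. -/
inductive EType where
  | right : EType
  | left : EType
  | both : EType
  | undirEdge : EType
deriving DecidableEq

namespace EType

/-- The edge has an arrowhead at its first endpoint. -/
def headFst : EType → Prop
  | .left => True
  | .both => True
  | _ => False

/-- The edge has an arrowhead at its second endpoint. -/
def headSnd : EType → Prop
  | .right => True
  | .both => True
  | _ => False

end EType

/-- A mixed graph with directed, bidirected and undirected edges. -/
structure MixedGraph (V : Type u) where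
  dir : V → V → Prop
  bi : V → V → Prop
  undir : V → V → Prop
  bi_symm : ∀ u v, bi u v → bi v u
  undir_symm : ∀ u v, undir u v → undir v u

namespace MixedGraph

variable {V : Type u}

/-- `G.IsEdge e u v` holds if the graph contains the edge `e` from `u` to `v`
(read in the direction of traversal). -/
def IsEdge (G : MixedGraph V) : EType → V → V → Prop
  | .right, u, v => G.dir u v
  | .left, u, v => G.dir v u
  | .both, u, v => G.bi u v
  | .undirEdge, u, v => G.undir u v

/-- Walks in a mixed graph, remembering the type of every traversed edge. -/
inductive Walk (G : MixedGraph V) : V → V → Type u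
  | nil (v : V) : Walk G v v
  | cons (u v w : V) (e : EType) (h : G.IsEdge e u v) (p : Walk G v w) : Walk G u w

namespace Walk

variable {G : MixedGraph V}

/-- The list of nodes visited by a walk (with multiplicity). -/
def support : {a b : V} → G.Walk a b → List V
  | _, _, .nil v => [v]
  | _, _, .cons u _ _ _ _ p => u :: p.support

/-- A path is a walk without repeated nodes. -/
def IsPath {a b : V} (p : G.Walk a b) : Prop := p.support.Nodup

/-- Auxiliary m-connectivity check: `ph` records whether the previous edge of
the walk has an arrowhead at the current start node.  At every interior node,
the node must be a collider (two arrowheads meet) iff it belongs to `Z`. -/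
def connFrom (Z : Set V) : Prop → {a b : V} → G.Walk a b → Prop
  | _, _, _, .nil _ => True
  | ph, _, _, .cons u _ _ e _ p =>
      ((ph ∧ e.headFst) ↔ u ∈ Z) ∧ p.connFrom Z e.headSnd

/-- The walk m-connects its endpoints given `Z`: all colliders and only
colliders on it are in `Z`. -/
def ConnBy (Z : Set V) : {a b : V} → G.Walk a b → Prop
  | _, _, .nil _ => True
  | _, _, .cons _ _ _ e _ p => p.connFrom Z e.headSnd

/-- A causal (directed) walk: every edge points towards the end node. -/
def IsCausal : {a b : V} → G.Walk a b → Prop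
  | _, _, .nil _ => True
  | _, _, .cons _ _ _ e _ p => e = EType.right ∧ p.IsCausal

/-- A walk is proper w.r.t. `X` if only its start node may belong to `X`. -/
def ProperFrom (X : Set V) : {a b : V} → G.Walk a b → Prop
  | _, _, .nil _ => True
  | _, _, .cons _ _ _ _ _ p => ∀ n ∈ p.support, n ∉ X

/-- Concatenation of walks. -/
def append : {a b c : V} → G.Walk a b → G.Walk b c → G.Walk a c
  | _, _, _, .nil _, q => q
  | _, _, _, .cons u v _ e h p, q => .cons u v _ e h (p.append q)

/-- The walk is nonempty and its first edge has an arrowhead at the start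
node. -/
def headAtStart : {a b : V} → G.Walk a b → Prop
  | _, _, .nil _ => False
  | _, _, .cons _ _ _ e _ _ => e.headFst

/-- The walk is nonempty and its last edge has an arrowhead at the end node. -/
def headAtEnd : {a b : V} → G.Walk a b → Prop
  | _, _, .nil _ => False
  | _, _, .cons _ _ _ e _ (.nil _) => e.headSnd
  | _, _, .cons _ _ _ _ _ p => p.headAtEnd

/-- `P` holds of every (ordered) pair of consecutive nodes of the walk. -/
def edgeProp (P : V → V → Prop) : {a b : V} → G.Walk a b → Prop
  | _, _, .nil _ => True
  | _, _, .cons u v _ _ _ p => P u v ∧ p.edgeProp P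

end Walk

/-- `x` and `y` are m-connected given `Z`: there is a walk between them on
which all colliders and only colliders are in `Z`. -/
def MConn (G : MixedGraph V) (Z : Set V) (x y : V) : Prop :=
  ∃ p : G.Walk x y, p.ConnBy Z

/-- `Z` m-separates the node sets `X` and `Y`. -/
def MSep (G : MixedGraph V) (X Y Z : Set V) : Prop :=
  ∀ x ∈ X, ∀ y ∈ Y, ¬ G.MConn Z x y

/-- `Z` is an m-separator relative to `(X, Y)`: it is disjoint from `X ∪ Y`
and m-separates `X` and `Y`. -/
def IsMSep (G : MixedGraph V) (X Y Z : Set V) : Prop :=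
  Disjoint Z (X ∪ Y) ∧ G.MSep X Y Z

/-- An `M`-minimal m-separator relative to `(X, Y)`. -/
def IsMinMSep (G : MixedGraph V) (X Y M Z : Set V) : Prop :=
  G.IsMSep X Y Z ∧ M ⊆ Z ∧ ∀ Z', Z' ⊂ Z → M ⊆ Z' → ¬ G.IsMSep X Y Z'

/-- One step of the anterior relation: a directed or undirected edge. -/
def antEdge (G : MixedGraph V) (u v : V) : Prop := G.dir u v ∨ G.undir u v

/-- `u` is an anterior of `v` (every node is its own anterior). -/
def Anterior (G : MixedGraph V) (u v : V) : Prop :=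
  Relation.ReflTransGen G.antEdge u v

/-- The set of anteriors of nodes of `W`. -/
def Ant (G : MixedGraph V) (W : Set V) : Set V := {u | ∃ w ∈ W, G.Anterior u w}

/-- `v` is a descendant of `u`, i.e. there is a directed path `u → ⋯ → v`
(every node is its own descendant/ancestor). -/
def Anc (G : MixedGraph V) (u v : V) : Prop := Relation.ReflTransGen G.dir u v

/-- The set of descendants of nodes of `W`. -/
def De (G : MixedGraph V) (W : Set V) : Set V := {v | ∃ w ∈ W, G.Anc w v}

/-- The set of ancestors of nodes of `W`. -/
def AnSet (G : MixedGraph V) (W : Set V) : Set V := {v | ∃ w ∈ W, G.Anc v w}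

/-- An ancestral graph: (1) for each edge `a ← b` or `a ↔ b`, `a` is not an
anterior of `b`; (2) for each edge `a − b` there is no edge `a ← c`, `a ↔ c`,
`b ← c` or `b ↔ c`. -/
def IsAG (G : MixedGraph V) : Prop :=
  (∀ a b, G.dir b a ∨ G.bi a b → ¬ G.Anterior a b) ∧
  (∀ a b, G.undir a b →
    ∀ c, ¬ G.dir c a ∧ ¬ G.bi a c ∧ ¬ G.dir c b ∧ ¬ G.bi b c)

/-- A DAG: only directed edges, and no directed cycles. -/
def IsDAG (G : MixedGraph V) : Prop :=
  (∀ u v, ¬ G.bi u v) ∧ (∀ u v, ¬ G.undir u v) ∧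
  (∀ v, ¬ Relation.TransGen G.dir v v)

/-- Two nodes are adjacent if they are joined by some edge. -/
def Adjacent (G : MixedGraph V) (u v : V) : Prop :=
  G.dir u v ∨ G.dir v u ∨ G.bi u v ∨ G.undir u v

/-- A maximal ancestral graph (MAG): only directed and bidirected edges, no
directed cycle, no almost-directed cycle, and every pair of non-adjacent
nodes can be m-separated by some set of the remaining nodes. -/
def IsMAG (G : MixedGraph V) : Prop :=
  (∀ u v, ¬ G.undir u v) ∧
  (∀ v, ¬ Relation.TransGen G.dir v v) ∧
  (∀ u v, G.bi u v → ¬ Relation.TransGen G.dir v u) ∧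
  (∀ u v, u ≠ v → ¬ G.Adjacent u v →
    ∃ Z : Set V, u ∉ Z ∧ v ∉ Z ∧ ¬ G.MConn Z u v)

/-- `PCP G X Y`: the set of nodes, excluding nodes of `X`, that lie on a
proper causal path from `X` to `Y`. -/
def PCP (G : MixedGraph V) (X Y : Set V) : Set V :=
  {w | w ∉ X ∧ ∃ x ∈ X, ∃ y ∈ Y, ∃ p : G.Walk x y,
    p.IsPath ∧ p.IsCausal ∧ p.ProperFrom X ∧ w ∈ p.support}

/-- `Dpcp G X Y`: the descendants of nodes on proper causal paths. -/
def Dpcp (G : MixedGraph V) (X Y : Set V) : Set V := G.De (G.PCP X Y)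

/-- Remove from `G` all edges into `A` and all edges out of `B`. -/
def rmInOut (G : MixedGraph V) (A B : Set V) : MixedGraph V where
  dir u v := G.dir u v ∧ v ∉ A ∧ u ∉ B
  bi u v := G.bi u v ∧ u ∉ A ∧ v ∉ A
  undir u v := G.undir u v ∧ u ∉ B ∧ v ∉ B
  bi_symm := fun u v h => ⟨G.bi_symm u v h.1, h.2.2, h.2.1⟩
  undir_symm := fun u v h => ⟨G.undir_symm u v h.1, h.2.2, h.2.1⟩

/-- The parametrized proper back-door graph: remove every edge `x → d` with
`x ∈ X` and `d ∈ PCP(X,Y) ∪ C`. -/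
def pbdC (G : MixedGraph V) (X Y C : Set V) : MixedGraph V where
  dir u v := G.dir u v ∧ ¬(u ∈ X ∧ v ∈ G.PCP X Y ∪ C)
  bi := G.bi
  undir := G.undir
  bi_symm := G.bi_symm
  undir_symm := G.undir_symm

/-- The proper back-door graph. -/
def pbd (G : MixedGraph V) (X Y : Set V) : MixedGraph V := G.pbdC X Y ∅

/-- The adjustment criterion (AC) in a DAG: (a) no element of `Z` is a
descendant in `G_{X̄}` of a node outside `X` lying on a proper causal path
from `X` to `Y`; (b) every proper non-causal path from `X` to `Y` is blocked
by `Z`. -/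
def SatisfiesACdag (G : MixedGraph V) (X Y Z : Set V) : Prop :=
  (∀ z ∈ Z, z ∉ (G.rmInOut X ∅).De (G.PCP X Y)) ∧
  (∀ x ∈ X, ∀ y ∈ Y, ∀ p : G.Walk x y,
    p.IsPath → p.ProperFrom X → ¬ p.IsCausal → ¬ p.ConnBy Z)

/-- The adjustment criterion (AC) in a MAG: (a) no element of `Z` is a
descendant in `M` of a node outside `X` lying on a proper causal path from
`X` to `Y`; (b) every proper non-causal path from `X` to `Y` is blocked by
`Z`. -/
def SatisfiesACmag (G : MixedGraph V) (X Y Z : Set V) : Prop :=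
  (∀ z ∈ Z, z ∉ G.Dpcp X Y) ∧
  (∀ x ∈ X, ∀ y ∈ Y, ∀ p : G.Walk x y,
    p.IsPath → p.ProperFrom X → ¬ p.IsCausal → ¬ p.ConnBy Z)

/-- The constructive back-door criterion (CBC): (a) `Z` avoids
`Dpcp(X,Y)`; (b) `Z` m-separates `X` and `Y` in the proper back-door
graph. -/
def SatisfiesCBC (G : MixedGraph V) (X Y Z : Set V) : Prop :=
  (∀ z ∈ Z, z ∉ G.Dpcp X Y) ∧ (G.pbd X Y).MSep X Y Z

/-- The parametrized constructive back-door criterion CBC(A,B,C). -/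
def SatisfiesCBCP (G : MixedGraph V) (X Y Z A B C : Set V) : Prop :=
  (∀ z ∈ Z, z ∉ (G.rmInOut A B).De (G.PCP X Y)) ∧ (G.pbdC X Y C).MSep X Y Z

namespace Walk

variable {G : MixedGraph V}

/-- Auxiliary check for inducing paths: every interior non-collider is in
`L`, and every interior collider is an ancestor of a node of `T`.  `ph`
records whether the previous edge has an arrowhead at the current node. -/
def indFrom (L T : Set V) : Prop → {a b : V} → G.Walk a b → Prop
  | _, _, _, .nil _ => True
  | ph, _, _, .cons u _ _ e _ p =>
      ((ph ∧ e.headFst) → ∃ t ∈ T, Relation.ReflTransGen G.dir u t) ∧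
      (¬(ph ∧ e.headFst) → u ∈ L) ∧ p.indFrom L T e.headSnd

/-- Interior conditions for inducing paths (endpoints are exempt). -/
def indBody (L T : Set V) : {a b : V} → G.Walk a b → Prop
  | _, _, .nil _ => True
  | _, _, .cons _ _ _ e _ p => p.indFrom L T e.headSnd

end Walk

/-- `p` is an inducing path with respect to `Z` and `L`: a path on which
every non-collider other than the endpoints is in `L` and every collider is
an ancestor of the endpoints or of `Z`. -/
def IsInducing (G : MixedGraph V) (Z L : Set V) {a b : V} (p : G.Walk a b) : Prop :=
  p.IsPath ∧ p.indBody L ({a, b} ∪ Z)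

/-- Adjacency in the MAG `G[∅_L`: `u, v ∉ L` are adjacent iff they cannot be
d-separated in `G` by any set `W ⊆ V∖L` (not containing `u, v`). -/
def magAdj (G : MixedGraph V) (L : Set V) (u v : V) : Prop :=
  u ∉ L ∧ v ∉ L ∧ u ≠ v ∧
  ∀ W : Set V, Disjoint W L → u ∉ W → v ∉ W → (G.MConn W u v ∧ G.MConn W v u)

/-- The MAG `G[∅_L` obtained from the DAG `G` by marginalizing `L`: adjacent
`u, v` are joined by `u → v` if `u` is an ancestor of `v` in `G` and `v` is
not an ancestor of `u`, and by `u ↔ v` if neither is an ancestor of the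
other. -/
def mag (G : MixedGraph V) (L : Set V) : MixedGraph V where
  dir u v := G.magAdj L u v ∧ G.Anc u v ∧ ¬ G.Anc v u
  bi u v := G.magAdj L u v ∧ ¬ G.Anc u v ∧ ¬ G.Anc v u
  undir _ _ := False
  bi_symm := fun u v h =>
    ⟨⟨h.1.2.1, h.1.1, h.1.2.2.1.symm,
      fun W hW hv hu => ⟨(h.1.2.2.2 W hW hu hv).2, (h.1.2.2.2 W hW hu hv).1⟩⟩,
      h.2.2, h.2.1⟩
  undir_symm := fun _ _ h => h.elim

/-- An inducing `Z`-trail in the MAG `G[∅_L`: a path whose interior nodes are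
exactly the `Z`-nodes on it, each consecutive pair being linked in `G` by an
inducing path w.r.t. `∅, L` which has arrowheads at the interior nodes. -/
def IsInducingZTrail (G : MixedGraph V) (Z L : Set V) {a b : V}
    (p : (G.mag L).Walk a b) : Prop :=
  p.IsPath ∧ a ∉ Z ∧ b ∉ Z ∧
  (∀ v ∈ p.support, v ≠ a → v ≠ b → v ∈ Z) ∧
  p.edgeProp (fun u v => ∃ q : G.Walk u v, G.IsInducing ∅ L q ∧
    (u ∈ Z → q.headAtStart) ∧ (v ∈ Z → q.headAtEnd))

end MixedGraph

open MixedGraph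

variable {V : Type u}

/-!
The concatenation `π₀₁π₁₂` satisfies the interior conditions of an inducing path with respect to
`T = {Z₀, Z₂} ∪ S ∪ S' ∪ {Z₁}`: `Z₁` is a collider on it and lies in `T`. Such a walk is then
shortened to a path by cutting out loops. A loop is cut at a repeated node `a`; in the shortened
walk `a` is a non-collider only if it was one at one of its two occurrences, hence it lies in `L`,
and a collider `a` is an ancestor of `T` because, in a DAG, following the walk from `a` along
tails-out edges reaches either a collider (an ancestor of `T`) or the endpoint, which lies in `T`.
-/

namespace MixedGraph.Walk

variable {G : MixedGraph V} {L T : Set V}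

lemma indFrom_mono {T' : Set V} (hTT' : T ⊆ T') {a b : V} (w : G.Walk a b) (ph : Prop)
    (hw : w.indFrom L T ph) : w.indFrom L T' ph := by
  induction w generalizing ph with
  | nil _ => trivial
  | cons _ _ _ _ _ p ih =>
    exact ⟨fun hc => (hw.1 hc).imp fun _ ht => ⟨hTT' ht.1, ht.2⟩, hw.2.1, ih _ hw.2.2⟩

lemma indBody_mono {T' : Set V} (hTT' : T ⊆ T') {a b : V} (w : G.Walk a b)
    (hw : w.indBody L T) : w.indBody L T' := by
  cases w with
  | nil _ => trivial
  | cons _ _ _ e _ p => exact indFrom_mono hTT' p e.headSnd hw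

lemma indBody_of_indFrom {a b : V} (w : G.Walk a b) {ph : Prop} (hw : w.indFrom L T ph) :
    w.indBody L T := by
  cases w with
  | nil _ => trivial
  | cons _ _ _ _ _ _ => exact hw.2.2

lemma indFrom_of_indFrom_of_start {a b : V} (w : G.Walk a b) {ph ph' : Prop}
    (hw : w.indFrom L T ph') (hL : ¬ ph → a ∈ L)
    (hanc : ph → ∃ t ∈ T, Relation.ReflTransGen G.dir a t) : w.indFrom L T ph := by
  cases w with
  | nil _ => trivial
  | cons _ _ _ e _ _ =>
    refine ⟨fun hc => hanc hc.1, fun hnc => ?_, hw.2.2⟩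
    by_cases hph : ph
    · exact hw.2.1 fun hc => hnc ⟨hph, hc.2⟩
    · exact hL hph

lemma exists_anc_of_indFrom (hund : ∀ u v, ¬ G.undir u v) {a b : V} (w : G.Walk a b)
    {ph : Prop} (hph : ph) (hw : w.indFrom L T ph) (hb : b ∈ T) :
    ∃ t ∈ T, Relation.ReflTransGen G.dir a t := by
  induction w generalizing ph with
  | nil v => exact ⟨v, hb, .refl⟩
  | cons _ _ _ e he p ih =>
    cases e with
    | left => exact hw.1 ⟨hph, trivial⟩
    | both => exact hw.1 ⟨hph, trivial⟩
    | undirEdge => exact absurd he (hund _ _)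
    | right =>
      obtain ⟨t, ht, hanc⟩ := ih trivial hw.2.2 hb
      exact ⟨t, ht, .head he hanc⟩

lemma exists_suffix_indFrom {a b : V} (w : G.Walk a b) {ph : Prop} (hw : w.indFrom L T ph)
    {u : V} (hu : u ∈ w.support) :
    ∃ (ph' : Prop) (q : G.Walk u b), q.indFrom L T ph' ∧ q.support.Sublist w.support := by
  induction w generalizing ph with
  | nil _ =>
    rw [support, List.mem_singleton] at hu
    subst hu
    exact ⟨ph, _, hw, .refl _⟩
  | cons c _ _ e _ p ih =>
    by_cases huc : u = c
    · subst huc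
      exact ⟨ph, _, hw, .refl _⟩
    · have hu' : u ∈ p.support := (List.mem_cons.1 hu).resolve_left huc
      obtain ⟨ph', q, hq, hsub⟩ := ih hw.2.2 hu'
      exact ⟨ph', q, hq, hsub.cons c⟩

lemma exists_isPath_indFrom (hund : ∀ u v, ¬ G.undir u v) {a b : V} (w : G.Walk a b)
    {ph : Prop} (hw : w.indFrom L T ph) (hb : b ∈ T) :
    ∃ p : G.Walk a b, p.IsPath ∧ p.indFrom L T ph ∧ p.support.Sublist w.support := by
  induction w generalizing ph with
  | nil v => exact ⟨.nil v, List.nodup_singleton v, hw, .refl _⟩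
  | cons c v _ e he p ih =>
    obtain ⟨p', hpath, hp', hsub⟩ := ih hw.2.2 hb
    by_cases hc : c ∈ p'.support
    · obtain ⟨ph', q, hq, hqsub⟩ := exists_suffix_indFrom p' hp' hc
      refine ⟨q, hqsub.nodup hpath, indFrom_of_indFrom_of_start q hq ?_ ?_,
        (hqsub.trans hsub).cons c⟩
      · exact fun hph => hw.2.1 fun hcol => hph hcol.1
      · exact fun hph => exists_anc_of_indFrom hund (.cons c v _ e he p) hph hw hb
    · exact ⟨.cons c v _ e he p', List.nodup_cons.2 ⟨hc, hpath⟩, ⟨hw.1, hw.2.1, hp'⟩,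
        hsub.cons_cons c⟩

lemma exists_isPath_indBody (hund : ∀ u v, ¬ G.undir u v) {a b : V} (w : G.Walk a b)
    (hw : w.indBody L T) (hb : b ∈ T) :
    ∃ p : G.Walk a b, p.IsPath ∧ p.indBody L T ∧ p.support.Sublist w.support := by
  cases w with
  | nil _ => exact ⟨.nil a, List.nodup_singleton a, trivial, .refl _⟩
  | cons _ v _ e he p =>
    obtain ⟨p', hpath, hp', hsub⟩ := exists_isPath_indFrom hund p hw hb
    by_cases ha : a ∈ p'.support
    · obtain ⟨_, q, hq, hqsub⟩ := exists_suffix_indFrom p' hp' ha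
      exact ⟨q, hqsub.nodup hpath, indBody_of_indFrom q hq, (hqsub.trans hsub).cons a⟩
    · exact ⟨.cons a v _ e he p', List.nodup_cons.2 ⟨ha, hpath⟩, hp', hsub.cons_cons a⟩

lemma indFrom_append {u v m c : V} {e : EType} {he : G.IsEdge e u v} (p : G.Walk v m)
    (hp : p.indFrom L T e.headSnd) (hend : (Walk.cons u v m e he p).headAtEnd)
    (q : G.Walk m c) (hq : q.indBody L T) (hstart : q.headAtStart) (hm : m ∈ T) :
    (p.append q).indFrom L T e.headSnd := by
  induction p generalizing u e with
  | nil _ =>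
    cases q with
    | nil _ => trivial
    | cons _ _ _ _ _ _ => exact ⟨fun _ => ⟨_, hm, .refl⟩, fun hnc => absurd ⟨hend, hstart⟩ hnc, hq⟩
  | cons _ _ _ _ _ p ih => exact ⟨hp.1, hp.2.1, ih hp.2.2 hend q hq hstart hm⟩

lemma indBody_append {a m c : V} (p : G.Walk a m) (hp : p.indBody L T) (hend : p.headAtEnd)
    (q : G.Walk m c) (hq : q.indBody L T) (hstart : q.headAtStart) (hm : m ∈ T) :
    (p.append q).indBody L T := by
  cases p with
  | nil _ => exact hend.elim
  | cons _ _ _ _ _ p => exact indFrom_append p hp hend q hq hstart hm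

end MixedGraph.Walk

theorem statement_15_general (G : MixedGraph V) (hDAG : G.IsDAG)
    (L S S' : Set V)
    (Z₀ Z₁ Z₂ : V)
    (π₀₁ : G.Walk Z₀ Z₁) (h₀₁ : G.IsInducing S L π₀₁) (hhead₀₁ : π₀₁.headAtEnd)
    (π₁₂ : G.Walk Z₁ Z₂) (h₁₂ : G.IsInducing S' L π₁₂) (hhead₁₂ : π₁₂.headAtStart) :
    ∃ p : G.Walk Z₀ Z₂, G.IsInducing (S ∪ S' ∪ {Z₁}) L p ∧
      p.support.Sublist (π₀₁.append π₁₂).support := by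
  set T : Set V := {Z₀, Z₂} ∪ (S ∪ S' ∪ {Z₁})
  have hT₀₁ : {Z₀, Z₁} ∪ S ⊆ T := by
    intro x; simp only [T, Set.mem_union, Set.mem_insert_iff, Set.mem_singleton_iff]; tauto
  have hT₁₂ : {Z₁, Z₂} ∪ S' ⊆ T := by
    intro x; simp only [T, Set.mem_union, Set.mem_insert_iff, Set.mem_singleton_iff]; tauto
  have happend : (π₀₁.append π₁₂).indBody L T :=
    π₀₁.indBody_append (π₀₁.indBody_mono hT₀₁ h₀₁.2) hhead₀₁ π₁₂ (π₁₂.indBody_mono hT₁₂ h₁₂.2)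
      hhead₁₂ (by simp [T])
  obtain ⟨p, hpath, hbody, hsub⟩ :=
    (π₀₁.append π₁₂).exists_isPath_indBody hDAG.2.1 happend (by simp [T])
  exact ⟨p, ⟨hpath, hbody⟩, hsub⟩

theorem statement_15 (G : MixedGraph V) (hDAG : G.IsDAG)
    (L S S' : Set V) (hSL : Disjoint S L) (hS'L : Disjoint S' L)
    (Z₀ Z₁ Z₂ : V)
    (π₀₁ : G.Walk Z₀ Z₁) (h₀₁ : G.IsInducing S L π₀₁) (hhead₀₁ : π₀₁.headAtEnd)
    (π₁₂ : G.Walk Z₁ Z₂) (h₁₂ : G.IsInducing S' L π₁₂) (hhead₁₂ : π₁₂.headAtStart) :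
    ∃ p : G.Walk Z₀ Z₂, G.IsInducing (S ∪ S' ∪ {Z₁}) L p ∧
      p.support.Sublist (π₀₁.append π₁₂).support :=
  statement_15_general G hDAG L S S' Z₀ Z₁ Z₂ π₀₁ h₀₁ hhead₀₁ π₁₂ h₁₂ hhead₁₂
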